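/- Let κ be a finite field with q elements. Assume α ≠ β, αγ ≠ β, β ≠ ε, and γ ≠ ε (i.e., (α+αγ,β)=(β+γ,ε)=0). Then for any x ∈ κ with x ≠ 0, 1, the Kampé de Fériet sum satisfies F^{1:1:1}_{1:0:0}(α;β;γ;βγ̄ | x,x) = ᾱ(1-x) + β̄(x)·((ε)°_β/(ᾱ)°_β), where F^{1:1:1}_{1:0:0}(α;β;γ;βγ̄|x,y) = (1/(1-q)²)∑_{ν,μ}((α)_{νμ}(γ)_ν(βγ̄)_μ/((β)°_{νμ}(ε)°_ν(ε)°_μ))ν(x)μ(y). -/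

import Mathlib

open scoped BigOperators

namespace KdF

variable {κ : Type*} [Field κ] [Fintype κ] [DecidableEq κ]

noncomputable instance : Fintype (MulChar κ ℂ) := Fintype.ofFinite _

/-- The Gauss sum `g(φ) = -∑ φ(x) ψ(x)`. -/
noncomputable def g (ψ : AddChar κ ℂ) (φ : MulChar κ ℂ) : ℂ :=
  -∑ x : κ, φ x * ψ x

/-- The variant `g°(φ) = q^{δ(φ)} g(φ)`. -/
noncomputable def gc (ψ : AddChar κ ℂ) (φ : MulChar κ ℂ) : ℂ :=
  (if φ = 1 then (Fintype.card κ : ℂ) else 1) * g ψ φ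

/-- Finite-field Pochhammer symbol `(α)_ν = g(αν)/g(α)`. -/
noncomputable def poch (ψ : AddChar κ ℂ) (α ν : MulChar κ ℂ) : ℂ :=
  g ψ (α * ν) / g ψ α

/-- Variant Pochhammer symbol `(α)°_ν = g°(αν)/g°(α)`. -/
noncomputable def pochc (ψ : AddChar κ ℂ) (α ν : MulChar κ ℂ) : ℂ :=
  gc ψ (α * ν) / gc ψ α

/-- `₁F₀(μ; x)` over the finite field `κ`. -/
noncomputable def F10 (ψ : AddChar κ ℂ) (μ : MulChar κ ℂ) (x : κ) : ℂ :=
  (1 / (1 - (Fintype.card κ : ℂ))) *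
    ∑ ν : MulChar κ ℂ, poch ψ μ ν / pochc ψ 1 ν * ν x

/-- `₂F₁(α, β; γ; x)` over the finite field `κ`. -/
noncomputable def F21 (ψ : AddChar κ ℂ) (α β γ : MulChar κ ℂ) (x : κ) : ℂ :=
  (1 / (1 - (Fintype.card κ : ℂ))) *
    ∑ ν : MulChar κ ℂ,
      poch ψ α ν * poch ψ β ν / (pochc ψ γ ν * pochc ψ 1 ν) * ν x

/-- `₃F₂(α, β, γ; φ, ρ; x)` over the finite field `κ`. -/
noncomputable def F32 (ψ : AddChar κ ℂ) (α β γ φ ρ : MulChar κ ℂ) (x : κ) : ℂ :=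
  (1 / (1 - (Fintype.card κ : ℂ))) *
    ∑ ν : MulChar κ ℂ,
      poch ψ α ν * poch ψ β ν * poch ψ γ ν /
        (pochc ψ φ ν * pochc ψ ρ ν * pochc ψ 1 ν) * ν x

end KdF

set_option linter.unusedSectionVars false

namespace KdFAux

open Finset KdF

variable {κ : Type*} [Field κ] [Fintype κ] [DecidableEq κ] {ψ : AddChar κ ℂ}

lemma q_ne_zero : (Fintype.card κ : ℂ) ≠ 0 := by
  exact_mod_cast Fintype.card_ne_zero

lemma q_sub_one_ne_zero : (Fintype.card κ : ℂ) - 1 ≠ 0 := by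
  have : (1 : ℕ) < Fintype.card κ := Fintype.one_lt_card
  have h : (Fintype.card κ : ℂ) ≠ 1 := by exact_mod_cast this.ne'
  exact sub_ne_zero.mpr h

lemma one_sub_q_ne_zero : (1 : ℂ) - (Fintype.card κ : ℂ) ≠ 0 := by
  have := q_sub_one_ne_zero (κ := κ)
  intro h; apply this; linear_combination -h

lemma mulChar_one_apply (x : κ) : (1 : MulChar κ ℂ) x = if x = 0 then 0 else 1 := by
  split_ifs with h
  · rw [h]; exact MulChar.map_zero _
  · exact MulChar.one_apply (isUnit_iff_ne_zero.mpr h)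

lemma g_eq (φ : MulChar κ ℂ) : g ψ φ = -gaussSum φ ψ := rfl

lemma g_one (hψ : ψ ≠ 1) : g ψ (1 : MulChar κ ℂ) = 1 := by
  have hψ0 : (ψ : AddChar κ ℂ) ≠ 0 := by
    rw [AddChar.ne_zero_iff]; exact AddChar.ne_one_iff.mp hψ
  have h0 : ∑ x : κ, ψ x = 0 := AddChar.sum_eq_zero_iff_ne_zero.mpr hψ0
  have : ∑ x : κ, (1 : MulChar κ ℂ) x * ψ x = -1 := by
    rw [sum_eq_sum_sdiff_singleton_add (mem_univ (0 : κ))]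
    rw [MulChar.map_zero, zero_mul, add_zero]
    have h1 : ∑ x ∈ univ \ {(0:κ)}, (1 : MulChar κ ℂ) x * ψ x
        = ∑ x ∈ univ \ {(0:κ)}, ψ x := by
      refine Finset.sum_congr rfl fun x hx => ?_
      simp only [mem_sdiff, mem_univ, mem_singleton, true_and] at hx
      rw [mulChar_one_apply, if_neg hx, one_mul]
    rw [h1]
    have := sum_eq_sum_sdiff_singleton_add (mem_univ (0 : κ)) (fun x => (ψ x : ℂ))
    rw [h0] at this
    rw [eq_neg_iff_add_eq_zero.mpr this.symm] at *
    simp [AddChar.map_zero_eq_one]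
  rw [g, this, neg_neg]

lemma map_neg_one_sq (φ : MulChar κ ℂ) : φ (-1) * φ (-1) = 1 := by
  rw [← map_mul]; norm_num

lemma map_neg_one_ne_zero (φ : MulChar κ ℂ) : φ (-1) ≠ 0 :=
  left_ne_zero_of_mul_eq_one (map_neg_one_sq φ)

lemma inv_apply_neg_one (φ : MulChar κ ℂ) : φ⁻¹ (-1) = φ (-1) := by
  rw [MulChar.inv_apply']; norm_num

lemma g_mul_g_inv (hψ : ψ ≠ 1) {φ : MulChar κ ℂ} (hφ : φ ≠ 1) :
    g ψ φ * g ψ φ⁻¹ = φ (-1) * (Fintype.card κ : ℂ) := by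
  have hp : ψ.IsPrimitive := AddChar.IsPrimitive.of_ne_one hψ
  have h1 := gaussSum_mul_gaussSum_eq_card hφ hp
  have h2 := mul_gaussSum_inv_eq_gaussSum φ⁻¹ ψ
  rw [g_eq, g_eq, neg_mul_neg, ← h2, inv_apply_neg_one]
  linear_combination φ (-1) * h1

lemma g_ne_zero (hψ : ψ ≠ 1) (φ : MulChar κ ℂ) : g ψ φ ≠ 0 := by
  rcases eq_or_ne φ 1 with h | h
  · rw [h, g_one hψ]; exact one_ne_zero
  · have := g_mul_g_inv hψ h
    have hne : φ (-1) * (Fintype.card κ : ℂ) ≠ 0 :=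
      mul_ne_zero (map_neg_one_ne_zero φ) q_ne_zero
    exact left_ne_zero_of_mul (this ▸ hne)

lemma gc_of_ne {φ : MulChar κ ℂ} (hφ : φ ≠ 1) : gc ψ φ = g ψ φ := by
  simp [gc, hφ]

lemma gc_one (hψ : ψ ≠ 1) : gc ψ (1 : MulChar κ ℂ) = (Fintype.card κ : ℂ) := by
  simp [gc, g_one hψ]

lemma gc_ne_zero (hψ : ψ ≠ 1) (φ : MulChar κ ℂ) : gc ψ φ ≠ 0 := by
  rcases eq_or_ne φ 1 with h | h
  · rw [h, gc_one hψ]; exact q_ne_zero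
  · rw [gc_of_ne h]; exact g_ne_zero hψ φ

/-- The normalized binomial coefficient `c_A(ν) = (A)_ν / (ε)°_ν`. -/
noncomputable def cc (ψ : AddChar κ ℂ) (A ν : MulChar κ ℂ) : ℂ :=
  poch ψ A ν / pochc ψ 1 ν

lemma cc_eq (hψ : ψ ≠ 1) (A ν : MulChar κ ℂ) :
    cc ψ A ν = (Fintype.card κ : ℂ) * g ψ (A * ν) / (g ψ A * gc ψ ν) := by
  rw [cc, poch, pochc, one_mul, gc_one hψ]
  have h1 : gc ψ ν ≠ 0 := gc_ne_zero hψ ν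
  have h2 : g ψ A ≠ 0 := g_ne_zero hψ A
  field_simp


section Orthogonality

lemma hasEnough : HasEnoughRootsOfUnity ℂ (Monoid.exponent κˣ) := by
  haveI : NeZero ((Monoid.exponent κˣ : ℂ)) :=
    ⟨Nat.cast_ne_zero.mpr (Monoid.exponent_ne_zero_of_finite)⟩
  infer_instance

lemma card_mulChar : (Fintype.card (MulChar κ ℂ) : ℂ) = (Fintype.card κ : ℂ) - 1 := by
  haveI := hasEnough (κ := κ)
  have h1 : Nat.card (MulChar κ ℂ) = Nat.card κˣ :=
    MulChar.card_eq_card_units_of_hasEnoughRootsOfUnity κ ℂ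
  rw [Nat.card_eq_fintype_card, Nat.card_eq_fintype_card] at h1
  rw [h1, Fintype.card_units]
  have : (1:ℕ) ≤ Fintype.card κ := Fintype.card_pos
  push_cast [Nat.cast_sub this]
  ring

lemma sum_chars (a : κ) :
    ∑ ν : MulChar κ ℂ, ν a = if a = 1 then (Fintype.card κ : ℂ) - 1 else 0 := by
  haveI := hasEnough (κ := κ)
  split_ifs with h
  · subst h
    simp only [map_one]
    rw [Finset.sum_const, card_univ, nsmul_eq_mul, mul_one, card_mulChar]
  · rcases eq_or_ne a 0 with h0 | h0
    · subst h0; simp [MulChar.map_zero]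
    · obtain ⟨χ, hχ⟩ := MulChar.exists_apply_ne_one_of_hasEnoughRootsOfUnity κ ℂ h
      have key : χ a * ∑ ν : MulChar κ ℂ, ν a = ∑ ν : MulChar κ ℂ, ν a := by
        rw [Finset.mul_sum]
        exact Fintype.sum_equiv (Equiv.mulLeft χ) _ _ fun ν => by
          simp [MulChar.mul_apply]
      have : (χ a - 1) * ∑ ν : MulChar κ ℂ, ν a = 0 := by linear_combination key
      rcases mul_eq_zero.mp this with h' | h'
      · exact absurd (sub_eq_zero.mp h') hχ
      · exact h'

lemma sum_val (ν : MulChar κ ℂ) :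
    ∑ t : κ, ν t = if ν = 1 then (Fintype.card κ : ℂ) - 1 else 0 := by
  split_ifs with h
  · subst h
    rw [Finset.sum_congr rfl fun x _ => mulChar_one_apply x]
    have : ∀ x : κ, (if x = 0 then (0:ℂ) else 1) = 1 - (if x = 0 then 1 else 0) := by
      intro x; split_ifs <;> ring
    simp only [this, Finset.sum_sub_distrib, Finset.sum_const, card_univ, nsmul_eq_mul, mul_one,
      Finset.sum_ite_eq' univ (0:κ) (fun _ => (1:ℂ)), mem_univ, if_true]
  · exact MulChar.sum_eq_zero_of_ne_one h

end Orthogonality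

section Key

lemma key_pointwise (hψ : ψ ≠ 1) {A : MulChar κ ℂ} (hA : A ≠ 1) {t : κ} (ht : t ≠ 0)
    (ν : MulChar κ ℂ) :
    cc ψ A ν * ν t = -∑ u : κ, A u * ν (-t * u * (1 - u)⁻¹) := by
  rcases eq_or_ne ν 1 with hν | hν
  · subst hν
    have hL : cc ψ A 1 * (1 : MulChar κ ℂ) t = 1 := by
      rw [cc_eq hψ, mul_one, gc_one hψ, mulChar_one_apply, if_neg ht]
      field_simp [g_ne_zero hψ A]
    rw [hL]
    have hterm : ∀ u : κ, A u * (1 : MulChar κ ℂ) (-t * u * (1 - u)⁻¹)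
        = if u = 1 then 0 else A u := by
      intro u
      rcases eq_or_ne u 1 with h1 | h1
      · subst h1; simp [MulChar.map_zero]
      rcases eq_or_ne u 0 with h0 | h0
      · subst h0; simp [MulChar.map_zero, if_neg h1]
      · rw [if_neg h1, mulChar_one_apply,
          if_neg (mul_ne_zero (mul_ne_zero (neg_ne_zero.mpr ht) h0)
            (inv_ne_zero (sub_ne_zero.mpr (Ne.symm h1)))), mul_one]
    rw [Finset.sum_congr rfl fun u _ => hterm u]
    have h2 : ∀ u : κ, (if u = 1 then (0:ℂ) else A u)
        = A u - (if u = 1 then A u else 0) := by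
      intro u; split_ifs <;> ring
    rw [Finset.sum_congr rfl fun u _ => h2 u, Finset.sum_sub_distrib,
      MulChar.sum_eq_zero_of_ne_one hA,
      Finset.sum_ite_eq' univ (1:κ) (fun u => (A u : ℂ))]
    simp
  rcases eq_or_ne ν A⁻¹ with hν2 | hν2
  · subst hν2
    have hν1 : A⁻¹ ≠ (1 : MulChar κ ℂ) := by simpa [inv_eq_one] using hA
    have hL : cc ψ A A⁻¹ * A⁻¹ t = A⁻¹ (-t) := by
      have e1 : A (-1) * A⁻¹ (-1) = 1 := by
        rw [← MulChar.mul_apply, mul_inv_cancel]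
        exact MulChar.one_apply (IsUnit.neg isUnit_one)
      have h1 := g_mul_g_inv hψ hA
      have hq := q_ne_zero (κ := κ)
      have hgA := g_ne_zero hψ A
      have hgAi := g_ne_zero hψ A⁻¹
      have hval : (Fintype.card κ : ℂ) / (g ψ A * g ψ A⁻¹) = A⁻¹ (-1) := by
        rw [h1, eq_comm, eq_div_iff (mul_ne_zero (map_neg_one_ne_zero A) hq)]
        linear_combination (Fintype.card κ : ℂ) * e1
      rw [cc_eq hψ, mul_inv_cancel, gc_of_ne hν1, g_one hψ, mul_one]
      have hmt : (-t : κ) = -1 * t := by ring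
      rw [hmt, map_mul, hval]
    rw [hL]
    have hterm : ∀ u : κ, A u * A⁻¹ (-t * u * (1 - u)⁻¹)
        = if u = 0 then 0 else A (1 - u) * A⁻¹ (-t) := by
      intro u
      rcases eq_or_ne u 0 with h0 | h0
      · subst h0; simp [MulChar.map_zero]
      · rw [if_neg h0, MulChar.inv_apply', MulChar.inv_apply', ← map_mul, ← map_mul]
        congr 1
        rcases eq_or_ne u 1 with h1 | h1
        · subst h1; simp
        · have h1u : (1:κ) - u ≠ 0 := sub_ne_zero.mpr (Ne.symm h1)
          field_simp
    rw [Finset.sum_congr rfl fun u _ => hterm u]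
    have h3 : ∀ u : κ, (if u = 0 then (0:ℂ) else A (1 - u) * A⁻¹ (-t))
        = (if (1 - u : κ) = 1 then 0 else A (1 - u)) * A⁻¹ (-t) := by
      intro u
      by_cases h : u = 0
      · subst h; simp
      · rw [if_neg h, if_neg (fun hh : (1:κ) - u = 1 => h (by linear_combination -hh))]
    rw [Finset.sum_congr rfl fun u _ => h3 u, ← Finset.sum_mul]
    have h4 : ∑ u : κ, (if (1 - u : κ) = 1 then (0:ℂ) else A (1 - u))
        = ∑ w : κ, (if (w : κ) = 1 then (0:ℂ) else A w) :=
      Equiv.sum_comp (Equiv.subLeft (1:κ)) (fun w => if (w : κ) = 1 then (0:ℂ) else A w)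
    rw [h4]
    have h5 : ∀ w : κ, (if (w : κ) = 1 then (0:ℂ) else A w)
        = A w - (if w = 1 then A w else 0) := by
      intro w; split_ifs <;> ring
    rw [Finset.sum_congr rfl fun w _ => h5 w, Finset.sum_sub_distrib,
      MulChar.sum_eq_zero_of_ne_one hA,
      Finset.sum_ite_eq' univ (1:κ) (fun w => (A w : ℂ))]
    simp
  · have hAν : A * ν ≠ 1 := fun h => hν2 (eq_inv_iff_mul_eq_one.mpr (by rwa [mul_comm] at h))
    have hJ := jacobiSum_mul_nontrivial (χ := A * ν) (φ := ν⁻¹)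
      (by rwa [mul_inv_cancel_right]) ψ
    rw [mul_inv_cancel_right] at hJ
    have hsc : cc ψ A ν = -(ν (-1) * jacobiSum (A * ν) ν⁻¹) := by
      have h1 := g_mul_g_inv hψ hν
      have hq := q_ne_zero (κ := κ)
      have hgA := g_ne_zero hψ A
      have hgν := g_ne_zero hψ ν
      have hsq := map_neg_one_sq ν
      have hJ' : g ψ (A*ν) * g ψ ν⁻¹ = -(g ψ A * jacobiSum (A*ν) ν⁻¹) := by
        rw [g_eq, g_eq, g_eq]; linear_combination -hJ
      rw [cc_eq hψ, gc_of_ne hν, div_eq_iff (mul_ne_zero hgA hgν)]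
      linear_combination (ν (-1) * g ψ ν) * hJ' - (ν (-1) * g ψ (A*ν)) * h1
        - ((Fintype.card κ : ℂ) * g ψ (A*ν)) * hsq
    rw [hsc, jacobiSum, neg_mul, neg_inj]
    rw [Finset.mul_sum, Finset.sum_mul]
    refine Finset.sum_congr rfl fun u _ => ?_
    rw [MulChar.mul_apply, MulChar.inv_apply']
    have harg : -t * u * (1 - u)⁻¹ = u * ((1 - u)⁻¹ * (-1 * t)) := by ring
    rw [harg, map_mul, map_mul, map_mul]
    ring

end Key

section Eval

lemma cc_one_left (hψ : ψ ≠ 1) (ν : MulChar κ ℂ) :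
    cc ψ 1 ν = if ν = 1 then 1 else (Fintype.card κ : ℂ) := by
  rw [cc_eq hψ, g_one hψ, one_mul, one_mul]
  split_ifs with h
  · subst h; rw [gc_one hψ, g_one hψ]; field_simp
  · rw [gc_of_ne h]; field_simp [g_ne_zero hψ ν]

lemma SA_eval (hψ : ψ ≠ 1) (A : MulChar κ ℂ) {t : κ} (ht : t ≠ 0) :
    ∑ ν : MulChar κ ℂ, cc ψ A ν * ν t
      = (1 - (Fintype.card κ : ℂ)) * A⁻¹ (1 - t)
        + (if A = 1 ∧ t = 1 then (1 - (Fintype.card κ : ℂ))^2 else 0) := by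
  rcases eq_or_ne A 1 with hA | hA
  · subst hA
    rw [inv_one]
    have hterm : ∀ ν : MulChar κ ℂ, cc ψ 1 ν * ν t
        = (Fintype.card κ : ℂ) * ν t
          + (if ν = 1 then (1 - (Fintype.card κ:ℂ)) * ν t else 0) := by
      intro ν; rw [cc_one_left hψ]; split_ifs with h
      · subst h; ring
      · ring
    rw [Finset.sum_congr rfl fun ν _ => hterm ν, Finset.sum_add_distrib, ← Finset.mul_sum,
      sum_chars,
      Finset.sum_ite_eq' univ (1 : MulChar κ ℂ)
        (fun ν => (1 - (Fintype.card κ:ℂ)) * ν t), if_pos (Finset.mem_univ _)]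
    rcases eq_or_ne t 1 with h1 | h1
    · subst h1
      rw [if_pos rfl, if_pos ⟨rfl, rfl⟩]
      have e0 : (1 : MulChar κ ℂ) (1 - 1) = 0 := by
        rw [sub_self]; exact MulChar.map_zero _
      have e1 : (1 : MulChar κ ℂ) (1 : κ) = 1 := map_one _
      rw [e0, e1]
      ring
    · rw [if_neg h1, if_neg (fun hc => h1 hc.2)]
      rw [mulChar_one_apply t, if_neg ht, mulChar_one_apply (1-t),
        if_neg (sub_ne_zero.mpr (Ne.symm h1))]
      ring
  · rw [if_neg (fun hc => hA hc.1)]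
    rw [Finset.sum_congr rfl fun ν _ => key_pointwise hψ hA ht ν, Finset.sum_neg_distrib,
      Finset.sum_comm]
    have hin : ∀ u : κ, ∑ ν : MulChar κ ℂ, A u * ν (-t * u * (1 - u)⁻¹)
        = A u * (if -t * u * (1 - u)⁻¹ = 1 then (Fintype.card κ : ℂ) - 1 else 0) := by
      intro u; rw [← Finset.mul_sum, sum_chars]
    rw [Finset.sum_congr rfl fun u _ => hin u]
    rcases eq_or_ne t 1 with h1 | h1
    · subst h1
      have hz : ∀ u : κ, -1 * u * (1 - u)⁻¹ ≠ (1:κ) := by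
        intro u h
        rcases eq_or_ne u 1 with h2 | h2
        · subst h2; simp at h
        · have h1u : (1:κ) - u ≠ 0 := sub_ne_zero.mpr (Ne.symm h2)
          field_simp at h
          exact one_ne_zero (by linear_combination -h)
      rw [Finset.sum_congr rfl fun u _ => by rw [if_neg (hz u), mul_zero]]
      rw [sub_self, MulChar.map_zero]
      simp
    · have h1t : (1:κ) - t ≠ 0 := sub_ne_zero.mpr (Ne.symm h1)
      rw [Finset.sum_eq_single ((1-t)⁻¹ : κ)]
      · have hcond : -t * (1-t)⁻¹ * (1 - (1-t)⁻¹)⁻¹ = (1:κ) := by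
          have h2 : (1:κ) - (1-t)⁻¹ = -t * (1-t)⁻¹ := by
            field_simp
            ring
          rw [h2]
          exact mul_inv_cancel₀ (mul_ne_zero (neg_ne_zero.mpr ht) (inv_ne_zero h1t))
        rw [if_pos hcond, ← MulChar.inv_apply']
        ring
      · intro b _ hb
        rw [if_neg, mul_zero]
        intro hc
        apply hb
        rcases eq_or_ne b 1 with h2 | h2
        · subst h2; simp at hc
        · have h1b : (1:κ) - b ≠ 0 := sub_ne_zero.mpr (Ne.symm h2)
          have : b * (1 - t) = 1 := by
            field_simp at hc
            linear_combination hc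
          exact eq_inv_of_mul_eq_one_left this
      · intro h; exact absurd (Finset.mem_univ _) h

lemma SA_zero (A : MulChar κ ℂ) :
    ∑ ν : MulChar κ ℂ, cc ψ A ν * ν (0:κ) = 0 := by
  rw [Finset.sum_congr rfl fun ν _ => by rw [MulChar.map_zero, mul_zero]]
  exact Finset.sum_const_zero

lemma S_mul (hψ : ψ ≠ 1) {A B : MulChar κ ℂ} (hAB : A * B ≠ 1) (t : κ) :
    (∑ ν : MulChar κ ℂ, cc ψ A ν * ν t) * (∑ ν : MulChar κ ℂ, cc ψ B ν * ν t)
      = (1 - (Fintype.card κ : ℂ)) * ∑ ν : MulChar κ ℂ, cc ψ (A*B) ν * ν t := by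
  rcases eq_or_ne t 0 with ht | ht
  · subst ht; rw [SA_zero, SA_zero, SA_zero]; ring
  rw [SA_eval hψ A ht, SA_eval hψ B ht, SA_eval hψ (A*B) ht]
  rcases eq_or_ne t 1 with h1 | h1
  · subst h1
    rw [sub_self, MulChar.map_zero, MulChar.map_zero, MulChar.map_zero,
      if_neg (fun hc : A * B = 1 ∧ _ => hAB hc.1)]
    rcases eq_or_ne A 1 with hA | hA
    · have hB : B ≠ 1 := fun h => hAB (by rw [hA, h, mul_one])
      rw [if_neg (fun hc : B = 1 ∧ _ => hB hc.1)]
      ring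
    · rw [if_neg (fun hc : A = 1 ∧ _ => hA hc.1)]
      ring
  · rw [if_neg (fun hc => h1 hc.2), if_neg (fun hc => h1 hc.2), if_neg (fun hc => h1 hc.2)]
    rw [mul_inv, MulChar.mul_apply]
    ring

lemma inv_sum (A : MulChar κ ℂ) (ν : MulChar κ ℂ) :
    ∑ t : κ, (∑ μ : MulChar κ ℂ, cc ψ A μ * μ t) * ν⁻¹ t
      = ((Fintype.card κ : ℂ) - 1) * cc ψ A ν := by
  have h1 : ∀ t : κ, (∑ μ : MulChar κ ℂ, cc ψ A μ * μ t) * ν⁻¹ t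
      = ∑ μ : MulChar κ ℂ, cc ψ A μ * (μ * ν⁻¹) t := by
    intro t
    rw [Finset.sum_mul]
    exact Finset.sum_congr rfl fun μ _ => by rw [MulChar.mul_apply]; ring
  rw [Finset.sum_congr rfl fun t _ => h1 t, Finset.sum_comm]
  have h2 : ∀ μ : MulChar κ ℂ, ∑ t : κ, cc ψ A μ * (μ * ν⁻¹) t
      = cc ψ A μ * (if μ = ν then (Fintype.card κ : ℂ) - 1 else 0) := by
    intro μ
    rw [← Finset.mul_sum, sum_val]
    simp only [mul_inv_eq_one]
  rw [Finset.sum_congr rfl fun μ _ => h2 μ]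
  have h3 : ∀ μ : MulChar κ ℂ, cc ψ A μ * (if μ = ν then (Fintype.card κ : ℂ) - 1 else 0)
      = if μ = ν then cc ψ A μ * ((Fintype.card κ : ℂ) - 1) else 0 := by
    intro μ; split_ifs <;> ring
  rw [Finset.sum_congr rfl fun μ _ => h3 μ,
    Finset.sum_ite_eq' univ ν (fun μ => cc ψ A μ * ((Fintype.card κ : ℂ) - 1)),
    if_pos (Finset.mem_univ _)]
  ring

lemma vandermonde (hψ : ψ ≠ 1) {A B : MulChar κ ℂ} (hAB : A * B ≠ 1) (lam : MulChar κ ℂ) :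
    ∑ ν : MulChar κ ℂ, cc ψ A ν * cc ψ B (lam * ν⁻¹)
      = (1 - (Fintype.card κ : ℂ)) * cc ψ (A*B) lam := by
  have hq1 : ((Fintype.card κ : ℂ) - 1) ≠ 0 := q_sub_one_ne_zero
  have hstep1 : ∀ ν : MulChar κ ℂ, cc ψ A ν * cc ψ B (lam * ν⁻¹)
      = ((Fintype.card κ : ℂ) - 1)⁻¹
        * ∑ t : κ, ((∑ μ : MulChar κ ℂ, cc ψ A μ * μ t) * ν⁻¹ t) * cc ψ B (lam * ν⁻¹) := by
    intro ν
    rw [← Finset.sum_mul, inv_sum]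
    field_simp
  rw [Finset.sum_congr rfl fun ν _ => hstep1 ν, ← Finset.mul_sum, Finset.sum_comm]
  have hstep2 : ∀ t : κ,
      ∑ ν : MulChar κ ℂ, ((∑ μ : MulChar κ ℂ, cc ψ A μ * μ t) * ν⁻¹ t) * cc ψ B (lam * ν⁻¹)
      = ((∑ μ : MulChar κ ℂ, cc ψ A μ * μ t) * (∑ μ : MulChar κ ℂ, cc ψ B μ * μ t))
          * lam⁻¹ t := by
    intro t
    have hinvol : Function.Involutive (fun ν : MulChar κ ℂ => lam * ν⁻¹) := by
      intro ν
      show lam * (lam * ν⁻¹)⁻¹ = ν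
      rw [mul_inv_rev, inv_inv, mul_comm ν lam⁻¹, mul_inv_cancel_left]
    have hc := Equiv.sum_comp hinvol.toPerm
      (fun ν : MulChar κ ℂ => ((∑ μ : MulChar κ ℂ, cc ψ A μ * μ t) * ν⁻¹ t)
        * cc ψ B (lam * ν⁻¹))
    simp only [Function.Involutive.coe_toPerm] at hc
    rw [← hc]
    have hterm : ∀ ν : MulChar κ ℂ,
        ((∑ μ : MulChar κ ℂ, cc ψ A μ * μ t) * (lam * ν⁻¹)⁻¹ t)
            * cc ψ B (lam * (lam * ν⁻¹)⁻¹)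
          = ((∑ μ : MulChar κ ℂ, cc ψ A μ * μ t) * lam⁻¹ t) * (cc ψ B ν * ν t) := by
      intro ν
      have e1 : lam * (lam * ν⁻¹)⁻¹ = ν := hinvol ν
      have e2 : (lam * ν⁻¹)⁻¹ = lam⁻¹ * ν := by rw [mul_inv_rev, inv_inv, mul_comm]
      rw [e1, e2, MulChar.mul_apply]
      ring
    rw [Finset.sum_congr rfl fun ν _ => hterm ν, ← Finset.mul_sum]
    ring
  rw [Finset.sum_congr rfl fun t _ => hstep2 t]
  rw [Finset.sum_congr rfl fun t _ => by rw [S_mul hψ hAB t]]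
  have hlast : ∀ t : κ,
      ((1 - (Fintype.card κ : ℂ)) * ∑ ν : MulChar κ ℂ, cc ψ (A*B) ν * ν t) * lam⁻¹ t
      = (1 - (Fintype.card κ : ℂ)) * ((∑ ν : MulChar κ ℂ, cc ψ (A*B) ν * ν t) * lam⁻¹ t) :=
    fun t => by ring
  rw [Finset.sum_congr rfl fun t _ => hlast t, ← Finset.mul_sum, inv_sum]
  field_simp

end Eval

section Final

lemma poch_ratio (hψ : ψ ≠ 1) {β : MulChar κ ℂ} (hβ : β ≠ 1) (lam : MulChar κ ℂ) :
    poch ψ β lam / pochc ψ β lam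
      = if lam = β⁻¹ then ((Fintype.card κ : ℂ))⁻¹ else 1 := by
  have hgβ := g_ne_zero hψ β
  have hq := q_ne_zero (κ := κ)
  rw [poch, pochc, gc_of_ne hβ]
  rcases eq_or_ne lam β⁻¹ with h | h
  · rw [h, if_pos rfl, mul_inv_cancel, gc_one hψ, g_one hψ]
    field_simp
  · rw [if_neg h, gc_of_ne (fun hc : β * lam = 1 =>
      h (eq_inv_iff_mul_eq_one.mpr (by rwa [mul_comm] at hc)))]
    exact div_self (div_ne_zero (g_ne_zero hψ _) hgβ)

lemma const_id (hψ : ψ ≠ 1) {α β : MulChar κ ℂ} (hαβ : α ≠ β) (hβ : β ≠ 1) :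
    ((Fintype.card κ : ℂ))⁻¹ * cc ψ α β⁻¹ = pochc ψ 1 β / pochc ψ α⁻¹ β := by
  have hq := q_ne_zero (κ := κ)
  have hβi : β⁻¹ ≠ (1 : MulChar κ ℂ) := by simpa [inv_eq_one] using hβ
  have hαβ' : α⁻¹ * β ≠ 1 := fun h => hαβ (inv_mul_eq_one.mp h)
  have hgβ := g_ne_zero hψ β
  have hgβi := g_ne_zero hψ β⁻¹
  have hgα := g_ne_zero hψ α
  have hgαi := g_ne_zero hψ α⁻¹
  have hgαβ := g_ne_zero hψ (α * β⁻¹)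
  have hgαβ' := g_ne_zero hψ (α⁻¹ * β)
  rw [cc_eq hψ, gc_of_ne hβi, pochc, pochc, one_mul, gc_one hψ, gc_of_ne hβ,
    gc_of_ne hαβ']
  rcases eq_or_ne α 1 with hα | hα
  · subst hα
    rw [inv_one, one_mul, gc_one hψ, g_one hψ, one_mul]
    field_simp
    rw [one_mul]; exact (div_self (g_ne_zero hψ _)).symm
  · rw [gc_of_ne (inv_ne_one.mpr hα)]
    have h1 := g_mul_g_inv hψ hα
    have h2 := g_mul_g_inv hψ hβ
    have h3 := g_mul_g_inv hψ (show α * β⁻¹ ≠ 1 from fun h => hαβ (mul_inv_eq_one.mp h))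
    rw [show (α * β⁻¹)⁻¹ = α⁻¹ * β by rw [mul_inv, inv_inv]] at h3
    have h4 : (α * β⁻¹) (-1) = α (-1) * β (-1) := by
      rw [MulChar.mul_apply, inv_apply_neg_one]
    rw [h4] at h3
    have L : ((Fintype.card κ : ℂ))⁻¹ * ((Fintype.card κ : ℂ) * g ψ (α*β⁻¹)
        / (g ψ α * g ψ β⁻¹)) = g ψ (α*β⁻¹) / (g ψ α * g ψ β⁻¹) := by
      rw [← mul_div_assoc, ← mul_assoc, inv_mul_cancel₀ hq, one_mul]
    have R : (g ψ β / (Fintype.card κ : ℂ)) / (g ψ (α⁻¹*β) / g ψ α⁻¹)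
        = (g ψ β * g ψ α⁻¹) / ((Fintype.card κ : ℂ) * g ψ (α⁻¹*β)) := by
      rw [div_div_eq_mul_div, div_mul_eq_mul_div, div_div]
    rw [L, R, div_eq_div_iff (mul_ne_zero hgα hgβi) (mul_ne_zero hq hgαβ')]
    linear_combination (Fintype.card κ : ℂ) * h3
      - (g ψ β * g ψ β⁻¹) * h1 - (α (-1) * (Fintype.card κ : ℂ)) * h2

end Final

section Main

open KdF

theorem main_stmt {κ : Type*} [Field κ] [Fintype κ] [DecidableEq κ]
    (ψ : AddChar κ ℂ) (hψ : ψ ≠ 1) (α β γ : MulChar κ ℂ)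
    (hαβ : α ≠ β) (hαγβ : α * γ ≠ β) (hβ : β ≠ 1) (hγ : γ ≠ 1)
    (x : κ) (hx0 : x ≠ 0) (hx1 : x ≠ 1) :
    (1 / (1 - (Fintype.card κ : ℂ)) ^ 2) *
      ∑ ν : MulChar κ ℂ, ∑ μ : MulChar κ ℂ,
        poch ψ α (ν * μ) * poch ψ γ ν * poch ψ (β * γ⁻¹) μ /
          (pochc ψ β (ν * μ) * pochc ψ 1 ν * pochc ψ 1 μ) * ν x * μ x =
      α⁻¹ (1 - x) + β⁻¹ x * (pochc ψ 1 β / pochc ψ α⁻¹ β) := by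
  classical
  have hq := q_ne_zero (κ := κ)
  have h1q := one_sub_q_ne_zero (κ := κ)
  have hterm : ∀ ν μ : MulChar κ ℂ,
      poch ψ α (ν * μ) * poch ψ γ ν * poch ψ (β * γ⁻¹) μ /
          (pochc ψ β (ν * μ) * pochc ψ 1 ν * pochc ψ 1 μ) * ν x * μ x
      = (poch ψ α (ν*μ) / pochc ψ β (ν*μ) * ((ν*μ) x))
          * (cc ψ γ ν * cc ψ (β*γ⁻¹) μ) := by
    intro ν μ
    simp only [cc, MulChar.mul_apply]
    ring
  rw [Finset.sum_congr rfl fun ν _ => Finset.sum_congr rfl fun μ _ => hterm ν μ]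
  have hre : ∀ ν : MulChar κ ℂ,
      (∑ μ : MulChar κ ℂ, (poch ψ α (ν*μ) / pochc ψ β (ν*μ) * ((ν*μ) x))
          * (cc ψ γ ν * cc ψ (β*γ⁻¹) μ))
      = ∑ lam : MulChar κ ℂ, (poch ψ α lam / pochc ψ β lam * (lam x))
          * (cc ψ γ ν * cc ψ (β*γ⁻¹) (ν⁻¹ * lam)) := by
    intro ν
    refine Fintype.sum_equiv (Equiv.mulLeft ν) _ _ fun μ => ?_
    simp only [Equiv.coe_mulLeft]
    rw [inv_mul_cancel_left]
  rw [Finset.sum_congr rfl fun ν _ => hre ν, Finset.sum_comm]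
  have hγβ : γ * (β * γ⁻¹) = β := by rw [mul_comm β γ⁻¹, mul_inv_cancel_left]
  have hvdm : ∀ lam : MulChar κ ℂ,
      ∑ ν : MulChar κ ℂ, cc ψ γ ν * cc ψ (β*γ⁻¹) (lam * ν⁻¹)
        = (1 - (Fintype.card κ : ℂ)) * cc ψ β lam := by
    intro lam
    have h := vandermonde hψ (A := γ) (B := β*γ⁻¹) (by rwa [hγβ]) lam
    rwa [hγβ] at h
  have hstep3 : ∀ lam : MulChar κ ℂ,
      ∑ ν : MulChar κ ℂ, (poch ψ α lam / pochc ψ β lam * (lam x))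
          * (cc ψ γ ν * cc ψ (β*γ⁻¹) (ν⁻¹ * lam))
      = (poch ψ α lam / pochc ψ β lam * (lam x))
          * ((1 - (Fintype.card κ : ℂ)) * cc ψ β lam) := by
    intro lam
    rw [← Finset.mul_sum, ← hvdm lam]
    congr 1
    exact Finset.sum_congr rfl fun ν _ => by rw [mul_comm ν⁻¹ lam]
  rw [Finset.sum_congr rfl fun lam _ => hstep3 lam]
  have hstep4 : ∀ lam : MulChar κ ℂ,
      (poch ψ α lam / pochc ψ β lam * (lam x))
          * ((1 - (Fintype.card κ : ℂ)) * cc ψ β lam)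
      = (1 - (Fintype.card κ : ℂ)) * (cc ψ α lam * lam x)
        + (if lam = β⁻¹
            then (1 - (Fintype.card κ : ℂ)) * (((Fintype.card κ:ℂ))⁻¹ - 1)
              * (cc ψ α lam * lam x)
            else 0) := by
    intro lam
    have hr := poch_ratio hψ hβ lam
    have hcomb : poch ψ α lam / pochc ψ β lam * (lam x)
          * ((1 - (Fintype.card κ : ℂ)) * cc ψ β lam)
        = (1 - (Fintype.card κ : ℂ)) * (cc ψ α lam
            * (poch ψ β lam / pochc ψ β lam) * lam x) := by
      simp only [cc]
      ring
    rw [hcomb, hr]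
    split_ifs with h
    · ring
    · ring
  rw [Finset.sum_congr rfl fun lam _ => hstep4 lam, Finset.sum_add_distrib,
    ← Finset.mul_sum, SA_eval hψ α hx0, if_neg (fun hc => hx1 hc.2),
    Finset.sum_ite_eq' Finset.univ (β⁻¹ : MulChar κ ℂ)
      (fun lam => (1 - (Fintype.card κ : ℂ)) * (((Fintype.card κ:ℂ))⁻¹ - 1)
        * (cc ψ α lam * lam x)),
    if_pos (Finset.mem_univ _)]
  rw [← const_id hψ hαβ hβ]
  field_simp
  ring

end Main

end KdFAux

open KdF

theorem stmt {κ : Type*} [Field κ] [Fintype κ] [DecidableEq κ]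
    (ψ : AddChar κ ℂ) (hψ : ψ ≠ 1) (α β γ : MulChar κ ℂ)
    (hαβ : α ≠ β) (hαγβ : α * γ ≠ β) (hβ : β ≠ 1) (hγ : γ ≠ 1)
    (x : κ) (hx0 : x ≠ 0) (hx1 : x ≠ 1) :
    (1 / (1 - (Fintype.card κ : ℂ)) ^ 2) *
      ∑ ν : MulChar κ ℂ, ∑ μ : MulChar κ ℂ,
        poch ψ α (ν * μ) * poch ψ γ ν * poch ψ (β * γ⁻¹) μ /
          (pochc ψ β (ν * μ) * pochc ψ 1 ν * pochc ψ 1 μ) * ν x * μ x =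
      α⁻¹ (1 - x) + β⁻¹ x * (pochc ψ 1 β / pochc ψ α⁻¹ β) :=
  KdFAux.main_stmt ψ hψ α β γ hαβ hαγβ hβ hγ x hx0 hx1
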